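/- With elevation and cost as defined (elev starts at 3^k, R triples it, R⁻¹ thirds it, G and G⁻¹ add current elevation to cost): for any valid move sequences P₀ and P₁, the sequence P₀ · R · G⁻¹ · P₁ has strictly greater cost than P₀ · G⁻¹ · G⁻¹ · R · P₁. -/
import Mathlib


/-- A move: red edge forward, red edge backward, green edge forward, green edge backward. -/
inductive Move : Type
  | R : Move
  | Rinv : Move
  | G : Move
  | Ginv : Move
deriving DecidableEq

/-- One step of the (elevation, cost) computation: `R` triples the elevation, `R⁻¹` divides it
by 3, and `G`, `G⁻¹` add the current elevation to the cost. -/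
def Move.step : ℚ × ℚ → Move → ℚ × ℚ
  | (e, c), .R => (3 * e, c)
  | (e, c), .Rinv => (e / 3, c)
  | (e, c), .G => (e, c + e)
  | (e, c), .Ginv => (e, c + e)

/-- Processing a sequence of moves left to right, starting with elevation `3^k` and cost `0`;
the first component is the final elevation, the second the total cost. -/
def run (k : ℕ) (P : List Move) : ℚ × ℚ :=
  P.foldl Move.step ((3 : ℚ) ^ k, 0)

lemma foldl_shift (P : List Move) : ∀ (e c x : ℚ),
    P.foldl Move.step (e, c + x) =
      ((P.foldl Move.step (e, c)).1, (P.foldl Move.step (e, c)).2 + x) := by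
  induction P with
  | nil => intro e c x; simp
  | cons m P ih =>
    intro e c x
    cases m <;> simp only [Move.step, List.foldl_cons]
    · exact ih _ _ _
    · exact ih _ _ _
    · rw [show c + x + e = c + e + x by ring]; exact ih _ _ _
    · rw [show c + x + e = c + e + x by ring]; exact ih _ _ _

/-- The sequence `P₀ · R · G⁻¹ · P₁` has strictly greater cost than
`P₀ · G⁻¹ · G⁻¹ · R · P₁` (provided the elevation after `P₀` is positive). -/
theorem cost_reduce_interior (k : ℕ) (P₀ P₁ : List Move)
    (hpos : 0 < (run k P₀).1) :
    (run k (P₀ ++ [Move.Ginv, Move.Ginv, Move.R] ++ P₁)).2 <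
      (run k (P₀ ++ [Move.R, Move.Ginv] ++ P₁)).2 := by
  unfold run at *
  rw [List.foldl_append, List.foldl_append, List.foldl_append, List.foldl_append]
  generalize hP : List.foldl Move.step ((3:ℚ)^k, 0) P₀ = p at *
  obtain ⟨e, c⟩ := p
  simp only [Move.step, List.foldl_cons, List.foldl_nil] at hpos ⊢
  rw [show c + e + e = c + 2 * e by ring, show c + 3 * e = c + 3 * e by ring,
    foldl_shift P₁ (3 * e) c (2 * e), foldl_shift P₁ (3 * e) c (3 * e)]
  simp only
  linarith
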